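/- The velocity field u(x,t) = h(t) + (ω/2)(−y, x) + Σ_{k=1}^{n} (aₖ(t)(Re zᵏ) + bₖ(t)(Im zᵏ), bₖ(t)(Re zᵏ) − aₖ(t)(Im zᵏ)) with z = x+iy, smooth functions h, aₖ, bₖ and constant ω, has spatially constant vorticity equal to ω, is divergence-free, has harmonic components, and the Jacobian matrix of ∂ₜu + (u·∇)u is symmetric at every (x,t); hence u is an exact (universal) solution of the planar incompressible Navier–Stokes equation for every viscosity ν. -/

import Mathlib

open Complex

noncomputable def pdx (f : ℝ → ℝ → ℝ → ℝ) (x y t : ℝ) : ℝ := deriv (fun x' => f x' y t) x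
noncomputable def pdy (f : ℝ → ℝ → ℝ → ℝ) (x y t : ℝ) : ℝ := deriv (fun y' => f x y' t) y
noncomputable def pdt (f : ℝ → ℝ → ℝ → ℝ) (x y t : ℝ) : ℝ := deriv (fun t' => f x y t') t
noncomputable def lapxy (f : ℝ → ℝ → ℝ → ℝ) (x y t : ℝ) : ℝ :=
  pdx (pdx f) x y t + pdy (pdy f) x y t

/-- First component of the universal polynomial solution. -/
noncomputable def U₁ (h₁ : ℝ → ℝ) (ω : ℝ) (a b : ℕ → ℝ → ℝ) (n : ℕ)
    (x y t : ℝ) : ℝ :=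
  h₁ t + ω / 2 * (-y) +
    ∑ k ∈ Finset.Icc 1 n,
      (a k t * (((x : ℂ) + (y : ℂ) * Complex.I) ^ k).re +
       b k t * (((x : ℂ) + (y : ℂ) * Complex.I) ^ k).im)

/-- Second component of the universal polynomial solution. -/
noncomputable def U₂ (h₂ : ℝ → ℝ) (ω : ℝ) (a b : ℕ → ℝ → ℝ) (n : ℕ)
    (x y t : ℝ) : ℝ :=
  h₂ t + ω / 2 * x +
    ∑ k ∈ Finset.Icc 1 n,
      (b k t * (((x : ℂ) + (y : ℂ) * Complex.I) ^ k).re -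
       a k t * (((x : ℂ) + (y : ℂ) * Complex.I) ^ k).im)

namespace UnivSol
noncomputable section

def P (k : ℕ) (x y : ℝ) : ℝ := (((x : ℂ) + (y : ℂ) * Complex.I) ^ k).re
def Q (k : ℕ) (x y : ℝ) : ℝ := (((x : ℂ) + (y : ℂ) * Complex.I) ^ k).im

lemma hC_x (k : ℕ) (x y : ℝ) :
    HasDerivAt (fun x' : ℝ => (((x' : ℂ) + (y : ℂ) * Complex.I) ^ k))
      ((k : ℂ) * (((x : ℂ) + (y : ℂ) * Complex.I)) ^ (k - 1)) x := by
  have h1 : HasDerivAt (fun w : ℂ => (w + (y : ℂ) * Complex.I) ^ k)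
      ((k : ℂ) * ((x : ℂ) + (y : ℂ) * Complex.I) ^ (k - 1)) (x : ℂ) := by
    have := (hasDerivAt_pow k ((x : ℂ) + (y : ℂ) * Complex.I)).comp (x : ℂ)
      ((hasDerivAt_id (x : ℂ)).add_const ((y : ℂ) * Complex.I))
    simpa [Function.comp_def] using this
  exact h1.comp_ofReal

lemma hC_y (k : ℕ) (x y : ℝ) :
    HasDerivAt (fun y' : ℝ => (((x : ℂ) + (y' : ℂ) * Complex.I) ^ k))
      ((k : ℂ) * (((x : ℂ) + (y : ℂ) * Complex.I)) ^ (k - 1) * Complex.I) y := by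
  have h1 : HasDerivAt (fun w : ℂ => ((x : ℂ) + w * Complex.I) ^ k)
      ((k : ℂ) * ((x : ℂ) + (y : ℂ) * Complex.I) ^ (k - 1) * Complex.I) (y : ℂ) := by
    have := (hasDerivAt_pow k ((x : ℂ) + (y : ℂ) * Complex.I)).comp (y : ℂ)
      (((hasDerivAt_id ((y : ℂ))).mul_const Complex.I).const_add (x : ℂ))
    simpa [Function.comp_def] using this
  exact h1.comp_ofReal

lemma hP_x (k : ℕ) (x y : ℝ) :
    HasDerivAt (fun x' => P k x' y) ((k : ℝ) * P (k - 1) x y) x := by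
  have := Complex.reCLM.hasFDerivAt.comp_hasDerivAt x (hC_x k x y)
  simpa [P, Function.comp_def, Complex.mul_re] using this

lemma hQ_x (k : ℕ) (x y : ℝ) :
    HasDerivAt (fun x' => Q k x' y) ((k : ℝ) * Q (k - 1) x y) x := by
  have := Complex.imCLM.hasFDerivAt.comp_hasDerivAt x (hC_x k x y)
  simpa [Q, Function.comp_def, Complex.mul_im] using this

lemma hP_y (k : ℕ) (x y : ℝ) :
    HasDerivAt (fun y' => P k x y') (-((k : ℝ) * Q (k - 1) x y)) y := by
  have := Complex.reCLM.hasFDerivAt.comp_hasDerivAt y (hC_y k x y)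
  simpa [P, Q, Function.comp_def, Complex.mul_re, Complex.mul_im] using this

lemma hQ_y (k : ℕ) (x y : ℝ) :
    HasDerivAt (fun y' => Q k x y') ((k : ℝ) * P (k - 1) x y) y := by
  have := Complex.imCLM.hasFDerivAt.comp_hasDerivAt y (hC_y k x y)
  simpa [P, Q, Function.comp_def, Complex.mul_re, Complex.mul_im] using this

def W (c d : ℕ → ℝ → ℝ) (n : ℕ) (x y t : ℝ) : ℝ :=
  ∑ k ∈ Finset.Icc 1 n, (c k t * P k x y + d k t * Q k x y)

def Sf (c d : ℕ → ℝ → ℝ) (n : ℕ) (x y t : ℝ) : ℝ :=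
  ∑ k ∈ Finset.Icc 1 n, (k : ℝ) * (c k t * P (k - 1) x y + d k t * Q (k - 1) x y)

def Sf₂ (c d : ℕ → ℝ → ℝ) (n : ℕ) (x y t : ℝ) : ℝ :=
  ∑ k ∈ Finset.Icc 1 n,
    (k : ℝ) * ((k - 1 : ℕ) : ℝ) * (c k t * P (k - 2) x y + d k t * Q (k - 2) x y)

lemma Sf_neg (c d : ℕ → ℝ → ℝ) (n : ℕ) (x y t : ℝ) :
    Sf (fun k s => -(c k s)) (fun k s => -(d k s)) n x y t = -Sf c d n x y t := by
  rw [Sf, Sf, ← Finset.sum_neg_distrib]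
  exact Finset.sum_congr rfl fun k _ => by ring

lemma Sf₂_neg (c d : ℕ → ℝ → ℝ) (n : ℕ) (x y t : ℝ) :
    Sf₂ (fun k s => -(c k s)) (fun k s => -(d k s)) n x y t = -Sf₂ c d n x y t := by
  rw [Sf₂, Sf₂, ← Finset.sum_neg_distrib]
  exact Finset.sum_congr rfl fun k _ => by ring

lemma hW_x (c d : ℕ → ℝ → ℝ) (n : ℕ) (x y t : ℝ) :
    HasDerivAt (fun x' => W c d n x' y t) (Sf c d n x y t) x := by
  have h := HasDerivAt.fun_sum (u := Finset.Icc 1 n)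
    (A := fun k x' => c k t * P k x' y + d k t * Q k x' y)
    (A' := fun k => c k t * ((k : ℝ) * P (k - 1) x y) + d k t * ((k : ℝ) * Q (k - 1) x y))
    (fun k _ => ((hP_x k x y).const_mul (c k t)).add ((hQ_x k x y).const_mul (d k t)))
  refine h.congr_deriv ?_
  exact Finset.sum_congr rfl fun k _ => by ring

lemma hW_y (c d : ℕ → ℝ → ℝ) (n : ℕ) (x y t : ℝ) :
    HasDerivAt (fun y' => W c d n x y' t)
      (Sf d (fun k s => -(c k s)) n x y t) y := by
  have h := HasDerivAt.fun_sum (u := Finset.Icc 1 n)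
    (A := fun k y' => c k t * P k x y' + d k t * Q k x y')
    (A' := fun k => c k t * (-((k : ℝ) * Q (k - 1) x y)) + d k t * ((k : ℝ) * P (k - 1) x y))
    (fun k _ => ((hP_y k x y).const_mul (c k t)).add ((hQ_y k x y).const_mul (d k t)))
  refine h.congr_deriv ?_
  exact Finset.sum_congr rfl fun k _ => by ring

lemma hS_x (c d : ℕ → ℝ → ℝ) (n : ℕ) (x y t : ℝ) :
    HasDerivAt (fun x' => Sf c d n x' y t) (Sf₂ c d n x y t) x := by
  have h := HasDerivAt.fun_sum (u := Finset.Icc 1 n)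
    (A := fun k x' => (k : ℝ) * (c k t * P (k - 1) x' y + d k t * Q (k - 1) x' y))
    (A' := fun k => (k : ℝ) * (c k t * (((k - 1 : ℕ) : ℝ) * P (k - 1 - 1) x y)
      + d k t * (((k - 1 : ℕ) : ℝ) * Q (k - 1 - 1) x y)))
    (fun k _ => (((hP_x (k - 1) x y).const_mul (c k t)).add
      ((hQ_x (k - 1) x y).const_mul (d k t))).const_mul (k : ℝ))
  refine h.congr_deriv ?_
  refine Finset.sum_congr rfl fun k _ => ?_
  simp only [Nat.sub_sub]
  ring

lemma hS_y (c d : ℕ → ℝ → ℝ) (n : ℕ) (x y t : ℝ) :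
    HasDerivAt (fun y' => Sf c d n x y' t)
      (Sf₂ d (fun k s => -(c k s)) n x y t) y := by
  have h := HasDerivAt.fun_sum (u := Finset.Icc 1 n)
    (A := fun k y' => (k : ℝ) * (c k t * P (k - 1) x y' + d k t * Q (k - 1) x y'))
    (A' := fun k => (k : ℝ) * (c k t * (-(((k - 1 : ℕ) : ℝ) * Q (k - 1 - 1) x y))
      + d k t * (((k - 1 : ℕ) : ℝ) * P (k - 1 - 1) x y)))
    (fun k _ => (((hP_y (k - 1) x y).const_mul (c k t)).add
      ((hQ_y (k - 1) x y).const_mul (d k t))).const_mul (k : ℝ))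
  refine h.congr_deriv ?_
  refine Finset.sum_congr rfl fun k _ => ?_
  simp only [Nat.sub_sub]
  ring

lemma hW_t (c d γ δ : ℕ → ℝ → ℝ) (n : ℕ) (x y t : ℝ)
    (hc : ∀ k, HasDerivAt (c k) (γ k t) t) (hd : ∀ k, HasDerivAt (d k) (δ k t) t) :
    HasDerivAt (fun t' => W c d n x y t') (W γ δ n x y t) t :=
  HasDerivAt.fun_sum (u := Finset.Icc 1 n)
    (A := fun k t' => c k t' * P k x y + d k t' * Q k x y)
    (A' := fun k => γ k t * P k x y + δ k t * Q k x y)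
    (fun k _ => ((hc k).mul_const (P k x y)).add ((hd k).mul_const (Q k x y)))

lemma U₂_eq (h₂ : ℝ → ℝ) (ω : ℝ) (a b : ℕ → ℝ → ℝ) (n : ℕ) :
    U₂ h₂ ω a b n = fun x y t =>
      h₂ t + ω / 2 * x + W b (fun k s => -(a k s)) n x y t := by
  funext x y t
  unfold U₂ W P Q
  congr 1
  exact Finset.sum_congr rfl fun k _ => by ring

-- derivative lemmas for U₁, U₂ in each variable
variable (h₁ h₂ : ℝ → ℝ) (ω : ℝ) (a b : ℕ → ℝ → ℝ) (n : ℕ) (x y t : ℝ)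

lemma hU₁x : HasDerivAt (fun x' => U₁ h₁ ω a b n x' y t) (Sf a b n x y t) x :=
  (hW_x a b n x y t).const_add (h₁ t + ω / 2 * (-y))

lemma hU₁y : HasDerivAt (fun y' => U₁ h₁ ω a b n x y' t)
    (-(ω / 2) + Sf b (fun k s => -(a k s)) n x y t) y := by
  have h := (((hasDerivAt_id y).neg.const_mul (ω / 2)).const_add (h₁ t)).add
    (hW_y a b n x y t)
  have e : ω / 2 * -1 + Sf b (fun k s => -(a k s)) n x y t
      = -(ω / 2) + Sf b (fun k s => -(a k s)) n x y t := by ring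
  rw [e] at h
  exact h

lemma hU₂x : HasDerivAt (fun x' => U₂ h₂ ω a b n x' y t)
    (ω / 2 + Sf b (fun k s => -(a k s)) n x y t) x := by
  rw [U₂_eq]
  have h := (((hasDerivAt_id x).const_mul (ω / 2)).const_add (h₂ t)).add
    (hW_x b (fun k s => -(a k s)) n x y t)
  have e : ω / 2 * 1 + Sf b (fun k s => -(a k s)) n x y t
      = ω / 2 + Sf b (fun k s => -(a k s)) n x y t := by ring
  rw [e] at h
  exact h

lemma hU₂y : HasDerivAt (fun y' => U₂ h₂ ω a b n x y' t)
    (Sf (fun k s => -(a k s)) (fun k s => -(b k s)) n x y t) y := by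
  rw [U₂_eq]
  exact (hW_y b (fun k s => -(a k s)) n x y t).const_add (h₂ t + ω / 2 * x)

lemma hU₁t (hh₁ : ContDiff ℝ (⊤ : ℕ∞) h₁) (ha : ∀ k, ContDiff ℝ (⊤ : ℕ∞) (a k))
    (hb : ∀ k, ContDiff ℝ (⊤ : ℕ∞) (b k)) :
    HasDerivAt (fun t' => U₁ h₁ ω a b n x y t')
      (deriv h₁ t + W (fun k => deriv (a k)) (fun k => deriv (b k)) n x y t) t :=
  (((hh₁.differentiable (by simp)) t).hasDerivAt.add_const (ω / 2 * (-y))).add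
    (hW_t a b _ _ n x y t
      (fun k => ((ha k).differentiable (by simp) t).hasDerivAt)
      (fun k => ((hb k).differentiable (by simp) t).hasDerivAt))

lemma hU₂t (hh₂ : ContDiff ℝ (⊤ : ℕ∞) h₂) (ha : ∀ k, ContDiff ℝ (⊤ : ℕ∞) (a k))
    (hb : ∀ k, ContDiff ℝ (⊤ : ℕ∞) (b k)) :
    HasDerivAt (fun t' => U₂ h₂ ω a b n x y t')
      (deriv h₂ t + W (fun k => deriv (b k)) (fun k u => -(deriv (a k) u)) n x y t) t := by
  rw [U₂_eq]
  exact (((hh₂.differentiable (by simp)) t).hasDerivAt.add_const (ω / 2 * x)).add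
    (hW_t b (fun k s => -(a k s)) _ _ n x y t
      (fun k => ((hb k).differentiable (by simp) t).hasDerivAt)
      (fun k => (((ha k).differentiable (by simp) t).hasDerivAt).neg))

lemma pdxU₁ : pdx (U₁ h₁ ω a b n) x y t = Sf a b n x y t :=
  (hU₁x h₁ ω a b n x y t).deriv

lemma pdyU₁ : pdy (U₁ h₁ ω a b n) x y t
    = -(ω / 2) + Sf b (fun k s => -(a k s)) n x y t :=
  (hU₁y h₁ ω a b n x y t).deriv

lemma pdxU₂ : pdx (U₂ h₂ ω a b n) x y t
    = ω / 2 + Sf b (fun k s => -(a k s)) n x y t :=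
  (hU₂x h₂ ω a b n x y t).deriv

lemma pdyU₂ : pdy (U₂ h₂ ω a b n) x y t
    = Sf (fun k s => -(a k s)) (fun k s => -(b k s)) n x y t :=
  (hU₂y h₂ ω a b n x y t).deriv

lemma pdtU₁ (hh₁ : ContDiff ℝ (⊤ : ℕ∞) h₁) (ha : ∀ k, ContDiff ℝ (⊤ : ℕ∞) (a k))
    (hb : ∀ k, ContDiff ℝ (⊤ : ℕ∞) (b k)) :
    pdt (U₁ h₁ ω a b n) x y t
      = deriv h₁ t + W (fun k => deriv (a k)) (fun k => deriv (b k)) n x y t :=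
  (hU₁t h₁ ω a b n x y t hh₁ ha hb).deriv

lemma pdtU₂ (hh₂ : ContDiff ℝ (⊤ : ℕ∞) h₂) (ha : ∀ k, ContDiff ℝ (⊤ : ℕ∞) (a k))
    (hb : ∀ k, ContDiff ℝ (⊤ : ℕ∞) (b k)) :
    pdt (U₂ h₂ ω a b n) x y t
      = deriv h₂ t + W (fun k => deriv (b k)) (fun k u => -(deriv (a k) u)) n x y t :=
  (hU₂t h₂ ω a b n x y t hh₂ ha hb).deriv

end
end UnivSol

open UnivSol

/-- sufficiency direction of the main theorem: the velocity field
`u(x,t) = h(t) + (ω/2)(−y,x) + Σₖ (aₖ Re zᵏ + bₖ Im zᵏ, bₖ Re zᵏ − aₖ Im zᵏ)` with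
smooth `h, aₖ, bₖ` and constant `ω` has spatially constant vorticity `ω`, is
divergence-free, has harmonic components, and the Jacobian of `∂ₜu + (u·∇)u` is
symmetric at every point; hence it is an exact (universal) planar Navier–Stokes
solution for every viscosity. -/
theorem universal_solution_sufficiency
    (h₁ h₂ : ℝ → ℝ) (ω : ℝ) (a b : ℕ → ℝ → ℝ) (n : ℕ)
    (hh₁ : ContDiff ℝ (⊤ : ℕ∞) h₁) (hh₂ : ContDiff ℝ (⊤ : ℕ∞) h₂)
    (ha : ∀ k, ContDiff ℝ (⊤ : ℕ∞) (a k)) (hb : ∀ k, ContDiff ℝ (⊤ : ℕ∞) (b k))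
    (x y t : ℝ) :
    pdx (U₂ h₂ ω a b n) x y t - pdy (U₁ h₁ ω a b n) x y t = ω ∧
    pdx (U₁ h₁ ω a b n) x y t + pdy (U₂ h₂ ω a b n) x y t = 0 ∧
    lapxy (U₁ h₁ ω a b n) x y t = 0 ∧
    lapxy (U₂ h₂ ω a b n) x y t = 0 ∧
    pdy (fun p q s => pdt (U₁ h₁ ω a b n) p q s +
          U₁ h₁ ω a b n p q s * pdx (U₁ h₁ ω a b n) p q s +
          U₂ h₂ ω a b n p q s * pdy (U₁ h₁ ω a b n) p q s) x y t =
    pdx (fun p q s => pdt (U₂ h₂ ω a b n) p q s +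
          U₁ h₁ ω a b n p q s * pdx (U₂ h₂ ω a b n) p q s +
          U₂ h₂ ω a b n p q s * pdy (U₂ h₂ ω a b n) p q s) x y t := by
  refine ⟨?_, ?_, ?_, ?_, ?_⟩
  · rw [pdxU₂, pdyU₁]; ring
  · rw [pdxU₁, pdyU₂, Sf_neg]; ring
  · have c1 : pdx (pdx (U₁ h₁ ω a b n)) x y t = Sf₂ a b n x y t := by
      show deriv (fun x' => pdx (U₁ h₁ ω a b n) x' y t) x = _
      rw [show (fun x' => pdx (U₁ h₁ ω a b n) x' y t)
          = fun x' => Sf a b n x' y t from funext fun x' => pdxU₁ h₁ ω a b n x' y t]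
      exact (hS_x a b n x y t).deriv
    have c2 : pdy (pdy (U₁ h₁ ω a b n)) x y t
        = -Sf₂ a b n x y t := by
      show deriv (fun y' => pdy (U₁ h₁ ω a b n) x y' t) y = _
      rw [show (fun y' => pdy (U₁ h₁ ω a b n) x y' t)
          = fun y' => -(ω / 2) + Sf b (fun k s => -(a k s)) n x y' t from
          funext fun y' => pdyU₁ h₁ ω a b n x y' t]
      rw [((hS_y b (fun k s => -(a k s)) n x y t).const_add (-(ω / 2))).deriv, Sf₂_neg]
    show pdx (pdx (U₁ h₁ ω a b n)) x y t + pdy (pdy (U₁ h₁ ω a b n)) x y t = 0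
    rw [c1, c2]; ring
  · have c1 : pdx (pdx (U₂ h₂ ω a b n)) x y t
        = Sf₂ b (fun k s => -(a k s)) n x y t := by
      show deriv (fun x' => pdx (U₂ h₂ ω a b n) x' y t) x = _
      rw [show (fun x' => pdx (U₂ h₂ ω a b n) x' y t)
          = fun x' => ω / 2 + Sf b (fun k s => -(a k s)) n x' y t from
          funext fun x' => pdxU₂ h₂ ω a b n x' y t]
      exact ((hS_x b (fun k s => -(a k s)) n x y t).const_add (ω / 2)).deriv
    have c2 : pdy (pdy (U₂ h₂ ω a b n)) x y t
        = -Sf₂ b (fun k s => -(a k s)) n x y t := by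
      show deriv (fun y' => pdy (U₂ h₂ ω a b n) x y' t) y = _
      rw [show (fun y' => pdy (U₂ h₂ ω a b n) x y' t)
          = fun y' => Sf (fun k s => -(a k s)) (fun k s => -(b k s)) n x y' t from
          funext fun y' => pdyU₂ h₂ ω a b n x y' t]
      rw [(hS_y (fun k s => -(a k s)) (fun k s => -(b k s)) n x y t).deriv, Sf₂_neg]
    show pdx (pdx (U₂ h₂ ω a b n)) x y t + pdy (pdy (U₂ h₂ ω a b n)) x y t = 0
    rw [c1, c2]; ring
  · -- symmetry of the Jacobian of the material acceleration
    have hfun1 : (fun p q s => pdt (U₁ h₁ ω a b n) p q s +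
          U₁ h₁ ω a b n p q s * pdx (U₁ h₁ ω a b n) p q s +
          U₂ h₂ ω a b n p q s * pdy (U₁ h₁ ω a b n) p q s)
        = fun p q s => (deriv h₁ s +
            W (fun k => deriv (a k)) (fun k => deriv (b k)) n p q s) +
          U₁ h₁ ω a b n p q s * Sf a b n p q s +
          U₂ h₂ ω a b n p q s *
            (-(ω / 2) + Sf b (fun k u => -(a k u)) n p q s) := by
      funext p q s
      rw [pdtU₁ h₁ ω a b n p q s hh₁ ha hb, pdxU₁ h₁ ω a b n p q s,
        pdyU₁ h₁ ω a b n p q s]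
    have hfun2 : (fun p q s => pdt (U₂ h₂ ω a b n) p q s +
          U₁ h₁ ω a b n p q s * pdx (U₂ h₂ ω a b n) p q s +
          U₂ h₂ ω a b n p q s * pdy (U₂ h₂ ω a b n) p q s)
        = fun p q s => (deriv h₂ s +
            W (fun k => deriv (b k)) (fun k u => -(deriv (a k) u)) n p q s) +
          U₁ h₁ ω a b n p q s *
            (ω / 2 + Sf b (fun k u => -(a k u)) n p q s) +
          U₂ h₂ ω a b n p q s *
            Sf (fun k u => -(a k u)) (fun k u => -(b k u)) n p q s := by
      funext p q s
      rw [pdtU₂ h₂ ω a b n p q s hh₂ ha hb, pdxU₂ h₂ ω a b n p q s,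
        pdyU₂ h₂ ω a b n p q s]
    rw [hfun1, hfun2]
    have L : HasDerivAt (fun q => (deriv h₁ t +
            W (fun k => deriv (a k)) (fun k => deriv (b k)) n x q t) +
          U₁ h₁ ω a b n x q t * Sf a b n x q t +
          U₂ h₂ ω a b n x q t *
            (-(ω / 2) + Sf b (fun k u => -(a k u)) n x q t))
        ((Sf (fun k => deriv (b k)) (fun k s => -(deriv (a k) s)) n x y t) +
          ((-(ω / 2) + Sf b (fun k s => -(a k s)) n x y t) * Sf a b n x y t +
            U₁ h₁ ω a b n x y t * Sf₂ b (fun k s => -(a k s)) n x y t) +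
          (Sf (fun k s => -(a k s)) (fun k s => -(b k s)) n x y t *
              (-(ω / 2) + Sf b (fun k u => -(a k u)) n x y t) +
            U₂ h₂ ω a b n x y t *
              Sf₂ (fun k s => -(a k s)) (fun k s => -(b k s)) n x y t)) y := by
      exact (((hW_y (fun k => deriv (a k)) (fun k => deriv (b k)) n x y t).const_add
          (deriv h₁ t)).add
        ((hU₁y h₁ ω a b n x y t).mul (hS_y a b n x y t))).add
        ((hU₂y h₂ ω a b n x y t).mul
          ((hS_y b (fun k u => -(a k u)) n x y t).const_add (-(ω / 2))))
    have R : HasDerivAt (fun p => (deriv h₂ t +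
            W (fun k => deriv (b k)) (fun k u => -(deriv (a k) u)) n p y t) +
          U₁ h₁ ω a b n p y t *
            (ω / 2 + Sf b (fun k u => -(a k u)) n p y t) +
          U₂ h₂ ω a b n p y t *
            Sf (fun k u => -(a k u)) (fun k u => -(b k u)) n p y t)
        ((Sf (fun k => deriv (b k)) (fun k u => -(deriv (a k) u)) n x y t) +
          (Sf a b n x y t * (ω / 2 + Sf b (fun k u => -(a k u)) n x y t) +
            U₁ h₁ ω a b n x y t * Sf₂ b (fun k u => -(a k u)) n x y t) +
          ((ω / 2 + Sf b (fun k u => -(a k u)) n x y t) *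
              Sf (fun k u => -(a k u)) (fun k u => -(b k u)) n x y t +
            U₂ h₂ ω a b n x y t *
              Sf₂ (fun k u => -(a k u)) (fun k u => -(b k u)) n x y t)) x := by
      exact (((hW_x (fun k => deriv (b k)) (fun k u => -(deriv (a k) u)) n x y t).const_add
          (deriv h₂ t)).add
        ((hU₁x h₁ ω a b n x y t).mul
          ((hS_x b (fun k u => -(a k u)) n x y t).const_add (ω / 2)))).add
        ((hU₂x h₂ ω a b n x y t).mul
          (hS_x (fun k u => -(a k u)) (fun k u => -(b k u)) n x y t))
    show deriv _ y = deriv _ x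
    rw [L.deriv, R.deriv, Sf_neg, Sf₂_neg]
    ring
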